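/- Let m ≥ 2 and let P be an invertible m×m row-stochastic matrix. Let h(P) ∈ ℝ^m be the vector of row entropies, let w = P⁻¹ h(P), and define v ∈ ℝ^m by v_y = 2^{−w_y} / ∑_{y'} 2^{−w_{y'}}. If there exists u ∈ Δ^m with u_z > 0 for all z and uᵀP = v, then u maximizes φ(·;P) over Δ^m, i.e. φ(u;P) = C(P). -/
import Mathlib


open Finset Matrix

/-- The probability simplex Δ^m. -/
def simplex (m : ℕ) : Set (Fin m → ℝ) :=
  {u | (∀ z, 0 ≤ u z) ∧ ∑ z, u z = 1}

/-- Shannon entropy (base 2) of a nonnegative vector, with `0 · log₂ 0 = 0`. -/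
noncomputable def entH {m : ℕ} (v : Fin m → ℝ) : ℝ :=
  ∑ y, -(v y * Real.logb 2 (v y))

/-- The channel function φ(u;P) = h(uᵀP) − ∑_z u_z h(P_z). -/
noncomputable def phi {m : ℕ} (u : Fin m → ℝ) (P : Matrix (Fin m) (Fin m) ℝ) : ℝ :=
  entH (fun y => ∑ z, u z * P z y) - ∑ z, u z * entH (P z)

/-- The channel capacity C(P) = sup_{u ∈ Δ^m} φ(u;P). -/
noncomputable def cap {m : ℕ} (P : Matrix (Fin m) (Fin m) ℝ) : ℝ :=
  sSup ((fun u => phi u P) '' simplex m)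

/-- Shannon: for an invertible row-stochastic P, with w = P⁻¹ h(P)
and v_y = 2^{−w_y}/∑_{y'} 2^{−w_{y'}}, any strictly positive u ∈ Δ^m with uᵀP = v
maximizes φ(·;P), i.e. φ(u;P) = C(P). -/
theorem shannon_first_order {m : ℕ} (hm : 2 ≤ m) (P : Matrix (Fin m) (Fin m) ℝ)
    (hPnonneg : ∀ z y, 0 ≤ P z y) (hProw : ∀ z, ∑ y, P z y = 1)
    (hPinv : IsUnit P.det)
    (w : Fin m → ℝ) (hw : w = P⁻¹ *ᵥ (fun z => entH (P z)))
    (v : Fin m → ℝ)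
    (hv : ∀ y, v y = (2 : ℝ) ^ (-(w y)) / ∑ y', (2 : ℝ) ^ (-(w y')))
    (u : Fin m → ℝ) (hu : u ∈ simplex m) (hupos : ∀ z, 0 < u z)
    (huv : ∀ y, ∑ z, u z * P z y = v y) :
    phi u P = cap P := by
  have hmpos : 0 < m := by omega
  haveI : Nonempty (Fin m) := ⟨⟨0, hmpos⟩⟩
  have hlog2 : (0:ℝ) < Real.log 2 := Real.log_pos one_lt_two
  set S : ℝ := ∑ y', (2:ℝ) ^ (-(w y')) with hS
  have hSpos : 0 < S :=
    Finset.sum_pos (fun y _ => Real.rpow_pos_of_pos two_pos _) univ_nonempty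
  have hvpos : ∀ y, 0 < v y := by
    intro y; rw [hv]
    exact div_pos (Real.rpow_pos_of_pos two_pos _) hSpos
  have hvsum : ∑ y, v y = 1 := by
    simp only [hv]
    rw [← Finset.sum_div, div_self (ne_of_gt hSpos)]
  have hlogv : ∀ y, Real.logb 2 (v y) = -(w y) - Real.logb 2 S := by
    intro y
    rw [hv, Real.logb_div (ne_of_gt (Real.rpow_pos_of_pos two_pos _)) (ne_of_gt hSpos),
      Real.logb_rpow (by norm_num) (by norm_num)]
  -- entropy of rows via w
  have hPw : ∀ z, entH (P z) = ∑ y, P z y * w y := by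
    have h1 : P *ᵥ w = fun z => entH (P z) := by
      rw [hw, Matrix.mulVec_mulVec, Matrix.mul_nonsing_inv P hPinv, Matrix.one_mulVec]
    intro z
    have := congrFun h1 z
    rw [← this]
    rfl
  -- phi rewritten through the output distribution
  have hphi : ∀ u' : Fin m → ℝ,
      phi u' P = ∑ y, (-((∑ z, u' z * P z y) * Real.logb 2 (∑ z, u' z * P z y))
        - (∑ z, u' z * P z y) * w y) := by
    intro u'
    have h2 : ∑ z, u' z * entH (P z) = ∑ y, (∑ z, u' z * P z y) * w y := by
      simp only [hPw, Finset.mul_sum, Finset.sum_mul]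
      rw [Finset.sum_comm]
      congr 1; ext y; congr 1; ext z; ring
    rw [phi, entH, h2, ← Finset.sum_sub_distrib]
  -- key bound: for any output distribution q, value ≤ logb 2 S
  have key : ∀ q : Fin m → ℝ, (∀ y, 0 ≤ q y) → (∑ y, q y = 1) →
      ∑ y, (-(q y * Real.logb 2 (q y)) - q y * w y) ≤ Real.logb 2 S := by
    intro q hq hq1
    have hterm : ∀ y, -(q y * Real.logb 2 (q y)) - q y * w y
        ≤ (v y - q y) / Real.log 2 + q y * Real.logb 2 S := by
      intro y
      rcases eq_or_lt_of_le (hq y) with h0 | hpos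
      · rw [← h0]
        simp only [zero_mul, mul_zero, neg_zero, sub_zero, zero_mul, add_zero]
        exact div_nonneg (le_of_lt (hvpos y)) hlog2.le
      · have hratio : 0 < v y / q y := div_pos (hvpos y) hpos
        have hgibbs : Real.log (v y / q y) ≤ v y / q y - 1 :=
          Real.log_le_sub_one_of_pos hratio
        have h3 : -(q y * Real.logb 2 (q y)) - q y * w y - q y * Real.logb 2 S
            = q y * Real.logb 2 (v y / q y) := by
          rw [Real.logb_div (ne_of_gt (hvpos y)) (ne_of_gt hpos), hlogv y]
          ring
        have h4 : q y * Real.logb 2 (v y / q y) ≤ (v y - q y) / Real.log 2 := by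
          rw [Real.logb, div_eq_mul_inv, ← mul_assoc]
          rw [div_eq_mul_inv]
          apply mul_le_mul_of_nonneg_right _ (le_of_lt (inv_pos.2 hlog2))
          calc q y * Real.log (v y / q y) ≤ q y * (v y / q y - 1) :=
                mul_le_mul_of_nonneg_left hgibbs (hq y)
            _ = v y - q y := by field_simp
        linarith
    calc ∑ y, (-(q y * Real.logb 2 (q y)) - q y * w y)
        ≤ ∑ y, ((v y - q y) / Real.log 2 + q y * Real.logb 2 S) :=
          Finset.sum_le_sum fun y _ => hterm y
      _ = (∑ y, (v y - q y)) / Real.log 2 + (∑ y, q y) * Real.logb 2 S := by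
          rw [Finset.sum_add_distrib, Finset.sum_div, ← Finset.sum_mul]
      _ = Real.logb 2 S := by
          rw [Finset.sum_sub_distrib, hvsum, hq1]
          simp
  -- value at u equals logb 2 S
  have hval : phi u P = Real.logb 2 S := by
    rw [hphi u]
    have : ∀ y, -((∑ z, u z * P z y) * Real.logb 2 (∑ z, u z * P z y))
        - (∑ z, u z * P z y) * w y = v y * Real.logb 2 S := by
      intro y
      rw [huv y, hlogv y]
      ring
    rw [Finset.sum_congr rfl fun y _ => this y, ← Finset.sum_mul, hvsum, one_mul]
  -- conclude: phi u P is the greatest value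
  have hgreat : IsGreatest ((fun u' => phi u' P) '' simplex m) (phi u P) := by
    constructor
    · exact ⟨u, hu, rfl⟩
    · rintro x ⟨u', hu', rfl⟩
      obtain ⟨hu'nn, hu'1⟩ := hu'
      have hqnn : ∀ y, 0 ≤ ∑ z, u' z * P z y := fun y =>
        Finset.sum_nonneg fun z _ => mul_nonneg (hu'nn z) (hPnonneg z y)
      have hq1 : ∑ y, ∑ z, u' z * P z y = 1 := by
        rw [Finset.sum_comm]
        calc ∑ z, ∑ y, u' z * P z y = ∑ z, u' z * ∑ y, P z y := by
              simp [Finset.mul_sum]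
          _ = 1 := by simp_rw [hProw]; simpa using hu'1
      show phi u' P ≤ phi u P
      rw [hval, hphi u']
      exact key _ hqnn hq1
  rw [cap]
  exact hgreat.csSup_eq.symm
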